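/- arXiv:2208.03783 — 2 statements merged into one kernel-verified Lean document; each statement's English description precedes it below -/
import Mathlib

section
/- For g(p) = n₊(A₁⁽¹⁾)(p) with p ≥ 5 prime and 3 ≤ k ≤ p, the cocycle φ_k = Σ_{i=1}^{s(k)} a_{i,k-i} e^{i,k-i} is a coboundary: φ_k = d¹(e^k). -/
noncomputable section

/-- The structure constants: `aZ i j` is 1, 0, or -1 according as
`j - i` is congruent to 1, 0, or -1 modulo 3. -/
def aZ (i j : ℕ) : ℤ :=
  if ((j : ℤ) - (i : ℤ)) % 3 = 1 then 1
  else if ((j : ℤ) - (i : ℤ)) % 3 = 0 then 0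
  else -1

variable (F : Type*) [Field F] (p : ℕ)

/-- The structure constants viewed in the field `F`. -/
def aF (i j : ℕ) : F := ((aZ i j : ℤ) : F)

/-- The basis vector `e_k` (for `1 ≤ k ≤ p`) of the truncated algebra
`g(p) = n₊(A₁⁽¹⁾)(p)`, modelled on `Fin p → F`; `E k = 0` for `k` out of range. -/
def E (k : ℕ) : Fin p → F :=
  if h : 1 ≤ k ∧ k ≤ p then Pi.single (⟨k - 1, by omega⟩ : Fin p) 1 else 0

/-- The `k`-th coordinate (coefficient of `e_k`) of an element of `g(p)`. -/
def coord (k : ℕ) (g : Fin p → F) : F :=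
  if h : 1 ≤ k ∧ k ≤ p then g ⟨k - 1, by omega⟩ else 0

/-- The Lie bracket of `g(p)`: `[e_i, e_j] = a_{i,j} e_{i+j}`, interpreted as `0`
when `i + j > p`. -/
def br (f g : Fin p → F) : Fin p → F :=
  ∑ i : Fin p, ∑ j : Fin p,
    (f i * g j * aF F (i.1 + 1) (j.1 + 1)) • E F p (i.1 + 1 + (j.1 + 1))

/-- `s(k)`: `k/2 - 1` if `k` is even, `(k-1)/2` if `k` is odd. -/
def sdeg (k : ℕ) : ℕ := if k % 2 = 0 then k / 2 - 1 else (k - 1) / 2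

/-- `M(p,k) = 1` if `k ≤ p + 1`, and `k - p` otherwise. -/
def Mlow (p k : ℕ) : ℕ := if k ≤ p + 1 then 1 else k - p

/-- The 2-cochain `e^{i,j}`, the dual of `e_i ∧ e_j`, as a bilinear form. -/
def wedge (i j : ℕ) (g h : Fin p → F) : F :=
  coord F p i g * coord F p j h - coord F p j g * coord F p i h

/-- The 2-cochain `φ_k = Σ_{i = M(p,k)}^{s(k)} a_{i,k-i} e^{i,k-i}`. -/
def phiC (k : ℕ) (g h : Fin p → F) : F :=
  ∑ i ∈ Finset.Icc (Mlow p k) (sdeg k), aF F i (k - i) * wedge F p i (k - i) g h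

/-- The Chevalley–Eilenberg differential `d²` with trivial coefficients. -/
def d2 (φ : (Fin p → F) → (Fin p → F) → F) (g h f : Fin p → F) : F :=
  φ (br F p g h) f - φ (br F p g f) h + φ (br F p h f) g

/-- The space `C² = (Λ² g(p))*`, modelled as the span of the `e^{i,j}`. -/
def C2span : Submodule F ((Fin p → F) → (Fin p → F) → F) :=
  Submodule.span F {w | ∃ i j : ℕ, 1 ≤ i ∧ i < j ∧ j ≤ p ∧ w = wedge F p i j}

/-! Only the pairs `(i, k - i)` with `0 < i < k` contribute to the `e_k`-coefficient of `[g, h]`.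
Since `a_{j,i} = -a_{i,j}` and `a_{i,i} = 0`, pairing `i` with `k - i` folds this sum onto
`i < k - i`, i.e. `1 ≤ i ≤ s(k)`, where it becomes `Σ a_{i,k-i} e^{i,k-i}(g, h) = φ_k(g, h)`. -/

open Finset

lemma sum_fin_succ_eq_sum_Icc {M : Type*} [AddCommMonoid M] (n : ℕ) (φ : ℕ → M) :
    ∑ i : Fin n, φ (i.1 + 1) = ∑ a ∈ Icc 1 n, φ a := by
  rw [Fin.sum_univ_eq_sum_range (fun i => φ (i + 1)), range_eq_Ico, sum_Ico_add' φ 0 n 1,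
    zero_add, Ico_add_one_right_eq_Icc]

lemma sum_Ioo_eq_sum_Icc_half_add_swap {M : Type*} [AddCommMonoid M] (k : ℕ) (f : ℕ → ℕ → M)
    (hf : ∀ i, f i i = 0) :
    ∑ i ∈ Ioo 0 k, f i (k - i) = ∑ i ∈ Icc 1 ((k - 1) / 2), (f i (k - i) + f (k - i) i) := by
  rw [← sum_filter_add_sum_filter_not (Ioo 0 k) (fun i => 2 * i < k),
    ← sum_filter_add_sum_filter_not (filter (fun i => ¬2 * i < k) (Ioo 0 k)) (fun i => 2 * i = k),
    sum_add_distrib]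
  have hlow : filter (fun i => 2 * i < k) (Ioo 0 k) = Icc 1 ((k - 1) / 2) := by
    ext i; simp only [mem_filter, mem_Ioo, mem_Icc]; omega
  have hdiag : ∑ i ∈ filter (fun i => 2 * i = k) (filter (fun i => ¬2 * i < k) (Ioo 0 k)),
      f i (k - i) = 0 :=
    sum_eq_zero fun i hi => by
      simp only [mem_filter] at hi
      rw [show k - i = i by omega, hf]
  have hhigh : ∑ i ∈ filter (fun i => ¬2 * i = k) (filter (fun i => ¬2 * i < k) (Ioo 0 k)),
      f i (k - i) = ∑ i ∈ Icc 1 ((k - 1) / 2), f (k - i) i := by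
    refine sum_nbij' (k - ·) (k - ·) ?_ ?_ ?_ ?_ ?_ <;> intro i hi <;>
      simp only [mem_filter, mem_Ioo, mem_Icc] at hi ⊢
    · omega
    · omega
    · omega
    · omega
    · rw [Nat.sub_sub_self (by omega)]
  rw [hlow, hdiag, hhigh, zero_add]

lemma aZ_swap (i j : ℕ) : aZ j i = -aZ i j := by
  unfold aZ; split_ifs <;> omega

lemma aZ_self (i : ℕ) : aZ i i = 0 := by
  simp [aZ]

lemma sdeg_eq (k : ℕ) : sdeg k = (k - 1) / 2 := by
  unfold sdeg; split_ifs <;> omega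

section

variable {F p}

lemma aF_swap (i j : ℕ) : aF F j i = -aF F i j := by
  rw [aF, aF, aZ_swap, Int.cast_neg]

lemma aF_self (i : ℕ) : aF F i i = 0 := by
  rw [aF, aZ_self, Int.cast_zero]

lemma E_apply (m : ℕ) (i : Fin p) : E F p m i = if m = i.1 + 1 then 1 else 0 := by
  unfold E
  split_ifs <;> simp [Pi.single_apply, Fin.ext_iff] <;> omega

lemma coord_succ (g : Fin p → F) (i : Fin p) : coord F p (i.1 + 1) g = g i := by
  simp [coord]

lemma coord_zero (g : Fin p → F) : coord F p 0 g = 0 := by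
  simp [coord]

lemma coord_br {k : ℕ} (hk : k ≤ p) (g h : Fin p → F) :
    coord F p k (br F p g h) =
      ∑ i ∈ Ioo 0 k, aF F i (k - i) * (coord F p i g * coord F p (k - i) h) := by
  obtain rfl | hk1 : k = 0 ∨ 1 ≤ k := by omega
  · simp [coord_zero]
  have hcoord : coord F p k (br F p g h) = ∑ a ∈ Icc 1 p, ∑ b ∈ Icc 1 p,
      if a + b = k then aF F a b * (coord F p a g * coord F p b h) else 0 := by
    simp only [← sum_fin_succ_eq_sum_Icc, coord_succ]
    rw [coord, dif_pos (And.intro hk1 hk)]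
    simp only [br, Finset.sum_apply, Pi.smul_apply, smul_eq_mul, E_apply]
    refine sum_congr rfl fun i _ => sum_congr rfl fun j _ => ?_
    rw [Nat.sub_add_cancel hk1, mul_ite, mul_one, mul_zero, mul_comm (g i * h j)]
  rw [hcoord, ← sum_product', ← sum_filter]
  refine sum_nbij' Prod.fst (fun i => (i, k - i)) ?_ ?_ ?_ ?_ ?_ <;> intro x hx <;>
    simp only [mem_filter, mem_product, mem_Ioo, mem_Icc] at hx ⊢
  · omega
  · omega
  · exact Prod.ext rfl (by omega)
  · rw [show k - x.1 = x.2 by omega]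

end

theorem phi_k_is_coboundary_general (p : ℕ) (F : Type*) [Field F] (k : ℕ) (hk : k ≤ p) :
    ∀ g h : Fin p → F, phiC F p k g h = coord F p k (br F p g h) := by
  intro g h
  rw [coord_br hk, sum_Ioo_eq_sum_Icc_half_add_swap k
      (fun i j => aF F i j * (coord F p i g * coord F p j h)) fun i => by rw [aF_self, zero_mul],
    phiC, Mlow, if_pos (by omega), sdeg_eq]
  refine sum_congr rfl fun i _ => ?_
  rw [wedge, aF_swap]
  ring

/-- For `3 ≤ k ≤ p`, the cocycle `φ_k` is a coboundary: `φ_k = d¹(e^k)`. -/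
theorem phi_k_is_coboundary (p : ℕ) (hp : p.Prime) (h5 : 5 ≤ p)
    (F : Type*) [Field F] [CharP F p] (k : ℕ) (hk3 : 3 ≤ k) (hk : k ≤ p) :
    ∀ g h : Fin p → F, phiC F p k g h = coord F p k (br F p g h) :=
  phi_k_is_coboundary_general p F k hk
end
end

section
/- For g(p) = n₊(A₁⁽¹⁾)(p) with p ≥ 5 prime and any degree k with p + 2 < k ≤ 2p - 1, the degree-k component of the kernel of d² is zero: ker d²_k = 0. -/
noncomputable section

variable (F : Type*) [Field F] (p : ℕ)

/-! A degree-`k` cochain `φ` is determined by its coefficients `c x = φ(e_x, e_{k-x})`. Evaluating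
`d²φ = 0` on `(e_a, e_{x-a}, e_{k-x})` with `a ∈ {1, 2}` kills the term containing
`[e_{x-a}, e_{k-x}]`, since its degree `k - a` exceeds `p`, and leaves
`a_{a,x-a} c(x) + a_{a,k-x} c(x-a) = 0`. As `x - 2` and `x - 4` are not both divisible by 3,
one of the two choices of `a` has `a_{a,x-a} = ±1`, so `c` vanishes by induction on `x`,
starting from the range `x > p` or `x < k - p` where `e_x` or `e_{k-x}` is zero (the latter
contains `x ≤ 2`). -/

section

variable {F p}

lemma E_eq_zero {a : ℕ} (h : ¬(1 ≤ a ∧ a ≤ p)) : E F p a = 0 := dif_neg h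

lemma E_eq_single {a : ℕ} (h : 1 ≤ a ∧ a ≤ p) : E F p a = Pi.single ⟨a - 1, by omega⟩ 1 :=
  dif_pos h

lemma coord_smul (i : ℕ) (c : F) (g : Fin p → F) :
    coord F p i (c • g) = c * coord F p i g := by
  unfold coord
  split_ifs <;> simp

lemma coord_E_self {a : ℕ} (h : 1 ≤ a ∧ a ≤ p) : coord F p a (E F p a) = 1 := by
  simp [coord, E_eq_single h, h]

lemma coord_E_of_ne {i a : ℕ} (h : i ≠ a) : coord F p i (E F p a) = 0 := by
  unfold coord E
  split_ifs <;> simp [Pi.single_apply, Fin.ext_iff]; omega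

lemma br_E {a b : ℕ} (ha : 1 ≤ a ∧ a ≤ p) (hb : 1 ≤ b ∧ b ≤ p) :
    br F p (E F p a) (E F p b) = aF F a b • E F p (a + b) := by
  simp [br, E_eq_single ha, E_eq_single hb, Pi.single_apply, Nat.sub_add_cancel ha.1,
    Nat.sub_add_cancel hb.1]

lemma le_sdeg_iff {b k : ℕ} (hk : 1 ≤ k) : b ≤ sdeg k ↔ 2 * b < k := by
  unfold sdeg
  split_ifs <;> omega

lemma aF_ne_zero {i j : ℕ} (h : ((j : ℤ) - i) % 3 ≠ 0) : aF F i j ≠ 0 := by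
  unfold aF aZ
  split_ifs <;> simp_all

lemma exists_aF_sub_ne_zero {x : ℕ} (hx : 3 ≤ x) :
    ∃ a, 1 ≤ a ∧ a ≤ 2 ∧ aF F a (x - a) ≠ 0 := by
  by_cases h : x % 3 = 2
  · exact ⟨2, by norm_num, le_rfl, aF_ne_zero (by omega)⟩
  · exact ⟨1, le_rfl, by norm_num, aF_ne_zero (by omega)⟩

variable (F p) in
def skewHomogeneousForms : Submodule F ((Fin p → F) → (Fin p → F) → F) where
  carrier := {ψ | (∀ (c : F) v w, ψ (c • v) w = c * ψ v w) ∧ ∀ v w, ψ v w = -ψ w v}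
  zero_mem' := by simp
  add_mem' := by
    rintro ψ χ ⟨hψ, hψ'⟩ ⟨hχ, hχ'⟩
    refine ⟨fun c v w => ?_, fun v w => ?_⟩ <;>
      simp only [Pi.add_apply, hψ, hχ, hψ' v, hχ' v] <;> ring
  smul_mem' := by
    rintro a ψ ⟨hψ, hψ'⟩
    refine ⟨fun c v w => ?_, fun v w => ?_⟩ <;>
      simp only [Pi.smul_apply, smul_eq_mul, hψ, hψ' v] <;> ring

lemma wedge_mem_skewHomogeneousForms (i j : ℕ) : wedge F p i j ∈ skewHomogeneousForms F p :=
  ⟨fun c v w => by simp only [wedge, coord_smul]; ring, fun v w => by simp only [wedge]; ring⟩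

variable {φ : (Fin p → F) → (Fin p → F) → F}

lemma apply_zero_left (hφ : φ ∈ skewHomogeneousForms F p) (w : Fin p → F) : φ 0 w = 0 := by
  simpa using hφ.1 0 0 w

lemma apply_zero_right (hφ : φ ∈ skewHomogeneousForms F p) (v : Fin p → F) : φ v 0 = 0 := by
  rw [hφ.2, apply_zero_left hφ, neg_zero]

lemma d2_E_E_E (hφ : ∀ (c : F) v w, φ (c • v) w = c * φ v w) {a b c : ℕ} (ha : 1 ≤ a ∧ a ≤ p)
    (hb : 1 ≤ b ∧ b ≤ p) (hc : 1 ≤ c ∧ c ≤ p) :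
    d2 F p φ (E F p a) (E F p b) (E F p c) = aF F a b * φ (E F p (a + b)) (E F p c)
      - aF F a c * φ (E F p (a + c)) (E F p b) + aF F b c * φ (E F p (b + c)) (E F p a) := by
  rw [d2, br_E ha hb, br_E ha hc, br_E hb hc, hφ, hφ, hφ]

lemma aF_mul_add_aF_mul_eq_zero (hφ : φ ∈ skewHomogeneousForms F p)
    (hd2 : ∀ g h f, d2 F p φ g h f = 0) {a b c : ℕ} (ha : 1 ≤ a ∧ a ≤ p) (hb : 1 ≤ b ∧ b ≤ p)
    (hc : 1 ≤ c ∧ c ≤ p) (hbc : p < b + c) :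
    aF F a b * φ (E F p (a + b)) (E F p c) + aF F a c * φ (E F p b) (E F p (a + c)) = 0 := by
  have h := d2_E_E_E hφ.1 ha hb hc
  rw [hd2, E_eq_zero (a := b + c) (by omega), apply_zero_left hφ, hφ.2 (E F p (a + c))] at h
  linear_combination -h

lemma apply_E_E_sub_eq_zero (hφ : φ ∈ skewHomogeneousForms F p)
    (hd2 : ∀ g h f, d2 F p φ g h f = 0) {k : ℕ} (hk : p + 2 < k) (x : ℕ) :
    φ (E F p x) (E F p (k - x)) = 0 := by
  induction x using Nat.strong_induction_on with
  | _ x ih =>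
  by_cases hx : x ≤ p ∧ k - x ≤ p
  · obtain ⟨a, ha1, ha2, haF⟩ := exists_aF_sub_ne_zero (F := F) (x := x) (by omega)
    have h := aF_mul_add_aF_mul_eq_zero hφ hd2 (a := a) (b := x - a) (c := k - x)
      (by omega) (by omega) (by omega) (by omega)
    rw [show a + (x - a) = x by omega, show a + (k - x) = k - (x - a) by omega,
      ih (x - a) (by omega), mul_zero, add_zero] at h
    exact (mul_eq_zero.1 h).resolve_left haF
  · rcases not_and_or.1 hx with hx | hx
    · rw [E_eq_zero (by omega), apply_zero_left hφ]
    · rw [E_eq_zero (a := k - x) (by omega), apply_zero_right hφ]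

lemma eq_sum_smul_wedge {k : ℕ}
    (hφ : φ ∈ Submodule.span F
      {w | ∃ i j : ℕ, 1 ≤ i ∧ i < j ∧ j ≤ p ∧ i + j = k ∧ w = wedge F p i j}) :
    φ = ∑ i ∈ Finset.Icc 1 (sdeg k), φ (E F p i) (E F p (k - i)) • wedge F p i (k - i) := by
  induction hφ using Submodule.span_induction with
  | mem w hw =>
    obtain ⟨i, j, hi, hij, hj, rfl, rfl⟩ := hw
    have hi_mem : i ∈ Finset.Icc 1 (sdeg (i + j)) :=
      Finset.mem_Icc.2 ⟨hi, (le_sdeg_iff (by omega)).2 (by omega)⟩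
    rw [Finset.sum_eq_single_of_mem i hi_mem]
    · rw [Nat.add_sub_cancel_left, wedge, coord_E_self ⟨hi, by omega⟩, coord_E_self ⟨by omega, hj⟩,
        coord_E_of_ne hij.ne', coord_E_of_ne hij.ne]
      simp
    · intro b hb hbi
      have hb2 := (le_sdeg_iff (by omega)).1 (Finset.mem_Icc.1 hb).2
      rw [wedge, coord_E_of_ne (Ne.symm hbi), coord_E_of_ne (i := j) (a := b) (by omega)]
      simp
  | zero => simp
  | add x y _ _ hx hy =>
    conv_lhs => rw [hx, hy]
    simp only [Pi.add_apply, add_smul, Finset.sum_add_distrib]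
  | smul a x _ hx =>
    conv_lhs => rw [hx]
    simp only [Finset.smul_sum, Pi.smul_apply, smul_eq_mul, smul_smul]

end

theorem ker_d2_high_degree_general (p : ℕ)
    (F : Type*) [Field F] (k : ℕ) (hk1 : p + 2 < k) :
    ∀ φ ∈ Submodule.span F
        {w : (Fin p → F) → (Fin p → F) → F |
          ∃ i j : ℕ, 1 ≤ i ∧ i < j ∧ j ≤ p ∧ i + j = k ∧ w = wedge F p i j},
      (∀ g h f, d2 F p φ g h f = 0) → φ = 0 := by
  intro φ hφ hd2
  have hskew : φ ∈ skewHomogeneousForms F p := Submodule.span_le.2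
    (by rintro _ ⟨i, j, -, -, -, -, rfl⟩; exact wedge_mem_skewHomogeneousForms i j) hφ
  rw [eq_sum_smul_wedge hφ]
  exact Finset.sum_eq_zero fun i _ => by rw [apply_E_E_sub_eq_zero hskew hd2 hk1, zero_smul]

/-- For `p + 2 < k ≤ 2p - 1`, the degree-`k` component of the kernel of `d²` is zero. -/
theorem ker_d2_high_degree (p : ℕ) (hp : p.Prime) (h5 : 5 ≤ p)
    (F : Type*) [Field F] [CharP F p] (k : ℕ) (hk1 : p + 2 < k) (hk2 : k ≤ 2 * p - 1) :
    ∀ φ ∈ Submodule.span F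
        {w : (Fin p → F) → (Fin p → F) → F |
          ∃ i j : ℕ, 1 ≤ i ∧ i < j ∧ j ≤ p ∧ i + j = k ∧ w = wedge F p i j},
      (∀ g h f, d2 F p φ g h f = 0) → φ = 0 :=
  ker_d2_high_degree_general p F k hk1
end
end
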